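/- Let π and ι be permutations of {1,…,n} of type (k,n) with ι ≤_∘ π, with lifts f, i ∈ Bound(k,n); set r = f⁻¹·i and m = i⁻¹·f·i (so m = r⁻¹·i). Then ℓ(m) < ℓ(f) if and only if there exists an affine transposition t with ℓ(t·r) < ℓ(r) and ℓ(t·i) < ℓ(i). -/

import Mathlib

open Finset

/-- `f` is an affine permutation of period `n`: an `n`-periodic bijection of `ℤ`. -/
def IsAffinePerm (n : ℕ) (f : Equiv.Perm ℤ) : Prop :=
  ∀ a : ℤ, f (a + n) = f a + n

/-- The length of an affine permutation of period `n`: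
the number of pairs `(i, j)` with `i ∈ {1,…,n}`, `j ∈ ℤ`, `i < j` and `f i > f j`. -/
noncomputable def aLen (n : ℕ) (f : Equiv.Perm ℤ) : ℕ :=
  Set.ncard {p : ℤ × ℤ | 1 ≤ p.1 ∧ p.1 ≤ (n : ℤ) ∧ p.1 < p.2 ∧ f p.2 < f p.1}

/-- `t` is the affine transposition `t_{a,b}` (period `n`): it swaps `a + jn` and `b + jn`
for all `j : ℤ` and fixes everything else; requires `a ≢ b (mod n)`. -/
def IsAffTranspAt (n : ℕ) (a b : ℤ) (t : Equiv.Perm ℤ) : Prop :=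
  ¬ ((n : ℤ) ∣ b - a) ∧
    ∀ x : ℤ,
      ((n : ℤ) ∣ x - a → t x = x - a + b) ∧
      ((n : ℤ) ∣ x - b → t x = x - b + a) ∧
      (¬ (n : ℤ) ∣ x - a → ¬ (n : ℤ) ∣ x - b → t x = x)

/-- `t` is an affine transposition of period `n`. -/
def IsAffTransp (n : ℕ) (t : Equiv.Perm ℤ) : Prop :=
  ∃ a b : ℤ, IsAffTranspAt n a b t

/-- The right associated reflections `T_R(f)`: affine transpositions `t` with `ℓ(f t) < ℓ(f)`. -/
def TR (n : ℕ) (f : Equiv.Perm ℤ) : Set (Equiv.Perm ℤ) :=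
  {t | IsAffTransp n t ∧ aLen n (f * t) < aLen n f}

/-- The left associated reflections `T_L(f)`: affine transpositions `t` with `ℓ(t f) < ℓ(f)`. -/
def TL (n : ℕ) (f : Equiv.Perm ℤ) : Set (Equiv.Perm ℤ) :=
  {t | IsAffTransp n t ∧ aLen n (t * f) < aLen n f}

/-- `u ≤_R f`: the factorization `f = u · (u⁻¹ f)` is length-additive. -/
def LeR (n : ℕ) (u f : Equiv.Perm ℤ) : Prop :=
  aLen n f = aLen n u + aLen n (u⁻¹ * f)

/-- `Bound k n`: bounded affine permutations, `a < f a ≤ a + n` with average shift `k`. -/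
def Bound (k n : ℕ) : Set (Equiv.Perm ℤ) :=
  {f | IsAffinePerm n f ∧ (∀ a : ℤ, a < f a ∧ f a ≤ a + n) ∧
    (∑ a ∈ Finset.Icc (1 : ℤ) (n : ℤ), (f a - a)) = (k : ℤ) * n}

/-- A permutation of `{1,…,n}` (modelled on `Fin n`) has type `(k,n)`:
`#{a : a ≤ π⁻¹ a} = k`. -/
def IsType (k n : ℕ) (π : Equiv.Perm (Fin n)) : Prop :=
  (Finset.univ.filter (fun a : Fin n => a ≤ π⁻¹ a)).card = k

/-- `f` is the lift of `π` : the affine permutation with `f a = π a` if `π a > a`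
and `f a = π a + n` otherwise (identifying `v : Fin n` with the integer `v + 1 ∈ {1,…,n}`). -/
def IsLift (n : ℕ) (π : Equiv.Perm (Fin n)) (f : Equiv.Perm ℤ) : Prop :=
  IsAffinePerm n f ∧ ∀ a : Fin n,
    f ((a.val : ℤ) + 1) =
      if (a.val : ℤ) < ((π a).val : ℤ) then ((π a).val : ℤ) + 1
      else ((π a).val : ℤ) + 1 + n

/-- The position of `a` in the cyclic (linear) order `<_i` on `Fin n` starting at `i`. -/
def cPos (n : ℕ) [NeZero n] (i a : Fin n) : ℕ := (a - i).val

/-- `a, b, c, d` is a cyclically ordered quadruple. -/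
def CyclicOrdered (n : ℕ) [NeZero n] (a b c d : Fin n) : Prop :=
  0 < cPos n a b ∧ cPos n a b < cPos n a c ∧ cPos n a c < cPos n a d

/-- Two subsets `I, J` of `Fin n` are weakly separated. -/
def WeaklySeparated (n : ℕ) [NeZero n] (I J : Finset (Fin n)) : Prop :=
  ¬ ∃ a b c d : Fin n, CyclicOrdered n a b c d ∧
      a ∈ I ∧ a ∉ J ∧ c ∈ I ∧ c ∉ J ∧ b ∈ J ∧ b ∉ I ∧ d ∈ J ∧ d ∉ I

/-- `(I_1,…,I_n)` (indexed by `Fin n`, cyclically) is a Grassmannlike necklace of type `(k,n)`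
with removal permutation `ρ` and insertion permutation `ι`. -/
def IsGrassNecklace (n k : ℕ) [NeZero n] (I : Fin n → Finset (Fin n))
    (ρ ι : Equiv.Perm (Fin n)) : Prop :=
  (∀ a : Fin n, (I a).card = k) ∧
    ∀ a : Fin n, ρ a ∈ I a ∧ I (a + 1) = insert (ι a) ((I a).erase (ρ a))

/-- Auxiliary construction of the Grassmannlike necklace with removal `ρ` and insertion `ι`. -/
def neckAux (n : ℕ) [NeZero n] (ρ ι : Equiv.Perm (Fin n)) : ℕ → Finset (Fin n)
  | 0 => Finset.univ.filter (fun a : Fin n => ρ⁻¹ a ≤ ι⁻¹ a)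
  | m + 1 => insert (ι (Fin.ofNat n m)) ((neckAux n ρ ι m).erase (ρ (Fin.ofNat n m)))

/-- The Grassmannlike necklace with removal permutation `ρ` and insertion permutation `ι`:
its first term is `{a : ρ⁻¹ a ≤ ι⁻¹ a}` and `I_{a+1} = (I_a ∖ {ρ a}) ∪ {ι a}`.
The forward Grassmann necklace of `π` is `necklace n 1 π`; the reverse Grassmann
necklace of `π` is `necklace n π⁻¹ 1`. -/
def necklace (n : ℕ) [NeZero n] (ρ ι : Equiv.Perm (Fin n)) (j : Fin n) : Finset (Fin n) :=
  neckAux n ρ ι j.val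

/-- The sorted list of positions (in the order `<_i`) of the elements of `S`. -/
def sortedShift (n : ℕ) [NeZero n] (i : Fin n) (S : Finset (Fin n)) : List ℕ :=
  (S.image (fun a => cPos n i a)).sort (· ≤ ·)

/-- `S ≤_i T` componentwise on `<_i`-sorted lists. -/
def leCyc (n : ℕ) [NeZero n] (i : Fin n) (S T : Finset (Fin n)) : Prop :=
  List.Forall₂ (· ≤ ·) (sortedShift n i S) (sortedShift n i T)

/-- The positroid `𝓜_π` of `π` (via Oh's theorem, taken as the definition). -/
def positroid (k n : ℕ) [NeZero n] (π : Equiv.Perm (Fin n)) : Set (Finset (Fin n)) :=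
  {S | S.card = k ∧ ∀ j : Fin n, leCyc n j (necklace n 1 π j) S}

/-- `v` lies strictly inside the arc from `w` clockwise to `x`. -/
def InArc (n : ℕ) [NeZero n] (w v x : Fin n) : Prop :=
  0 < cPos n w v ∧ cPos n w v < cPos n w x

/-- The chords `w ↦ x` and `y ↦ z` are noncrossing: they do not intersect,
including at boundary vertices. -/
def Noncrossing (n : ℕ) [NeZero n] (w x y z : Fin n) : Prop :=
  w ≠ y ∧ w ≠ z ∧ x ≠ y ∧ x ≠ z ∧
    ¬ ((InArc n w y x ∧ InArc n x z w) ∨ (InArc n w z x ∧ InArc n x y w))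

/-- The (distinct) chords `w ↦ x` and `y ↦ z` are crossing. -/
def Crossing (n : ℕ) [NeZero n] (w x y z : Fin n) : Prop :=
  (w ≠ y ∨ x ≠ z) ∧ ¬ Noncrossing n w x y z

/-- The noncrossing chords `w ↦ x` and `y ↦ z` are aligned:
`w <_w y <_w z <_w x`, or `w <_w x <_w z <_w y`, or `w = x` and `w <_w y <_w z`. -/
def Aligned (n : ℕ) [NeZero n] (w x y z : Fin n) : Prop :=
  Noncrossing n w x y z ∧
    ((0 < cPos n w y ∧ cPos n w y < cPos n w z ∧ cPos n w z < cPos n w x) ∨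
     (0 < cPos n w x ∧ cPos n w x < cPos n w z ∧ cPos n w z < cPos n w y) ∨
     (w = x ∧ 0 < cPos n w y ∧ cPos n w y < cPos n w z))

/-- A noncrossing toggle relating two Grassmannlike necklaces, each encoded by its pair
(removal permutation, insertion permutation): at some position `p`, the toggle is defined
(`ρ(p-1) ≠ ι(p)` and `ρ(p) ≠ ι(p-1)`), the chords `ρ(p-1) ↦ ι(p-1)` and `ρ(p) ↦ ι(p)`
are noncrossing, and the new permutations are obtained by right multiplication by the
transposition of positions `p-1, p`. -/
def NoncrossingToggle (n : ℕ) [NeZero n]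
    (N N' : Equiv.Perm (Fin n) × Equiv.Perm (Fin n)) : Prop :=
  ∃ p : Fin n,
    N.1 (p - 1) ≠ N.2 p ∧ N.1 p ≠ N.2 (p - 1) ∧
    Noncrossing n (N.1 (p - 1)) (N.2 (p - 1)) (N.1 p) (N.2 p) ∧
    N'.1 = N.1 * Equiv.swap (p - 1) p ∧ N'.2 = N.2 * Equiv.swap (p - 1) p

/-- The Plücker coordinate `Δ_I(M)`: the determinant of the `k × k` submatrix of `M`
on the columns indexed by `I` (in increasing order); junk value `0` if `I.card ≠ k`. -/
noncomputable def plucker (k n : ℕ) (M : Matrix (Fin k) (Fin n) ℂ) (I : Finset (Fin n)) : ℂ :=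
  if h : I.card = k then
    Matrix.det (Matrix.of (fun r c : Fin k => M r ((I.orderIsoOfFin h) c).1))
  else 0

/-- The matrix cone `Π°_π` over the open positroid variety of `π`: full-rank `k × n`
matrices with `Δ_J = 0` for `J ∉ 𝓜_π` and nonvanishing forward-necklace Plücker coordinates. -/
def openPos (k n : ℕ) [NeZero n] (π : Equiv.Perm (Fin n)) : Set (Matrix (Fin k) (Fin n) ℂ) :=
  {M | M.rank = k ∧
    (∀ J : Finset (Fin n), J.card = k → J ∉ positroid k n π → plucker k n M J = 0) ∧
    (∀ j : Fin n, plucker k n M (necklace n 1 π j) ≠ 0)}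

/-- `N` is the right twist of `M` along the necklace `I` with removal permutation `ρ`:
for all `a` and all `b ∈ I a`, `⟨N_a, M_b⟩ = δ_{b, ρ a}`. -/
def IsRightTwist (k n : ℕ) (I : Fin n → Finset (Fin n)) (ρ : Equiv.Perm (Fin n))
    (M N : Matrix (Fin k) (Fin n) ℂ) : Prop :=
  ∀ a : Fin n, ∀ b ∈ I a, (∑ j : Fin k, N j a * M j b) = if b = ρ a then 1 else 0

/-- `N` is the left twist of `M` along the necklace `I` with insertion permutation `ι`:
for all `a` and all `b ∈ I (a+1)`, `⟨N_a, M_b⟩ = δ_{b, ι a}`. -/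
def IsLeftTwist (k n : ℕ) [NeZero n] (I : Fin n → Finset (Fin n)) (ι : Equiv.Perm (Fin n))
    (M N : Matrix (Fin k) (Fin n) ℂ) : Prop :=
  ∀ a : Fin n, ∀ b ∈ I (a + 1), (∑ j : Fin k, N j a * M j b) = if b = ι a then 1 else 0

/-!
Inversions of an affine permutation come in classes under diagonal translation by the period,
and `ℓ` counts these classes through their representatives `(a, b)` with `1 ≤ a ≤ n`.

Sorting the inversions of `u` according to the relative order of their `v`-preimages gives
`ℓ(u) + ℓ(v) = ℓ(uv) + 2 · #(Inv v ∖ Inv uv)`. With `u = i⁻¹f`, `v = i` and the length-additivity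
`ℓ(f) = ℓ(i) + ℓ(i⁻¹f)` this turns `ℓ(m) < ℓ(f)` into the existence of an inversion `(a, b)` of `i`
that is not an inversion of `m = i⁻¹ f i`. On the other hand, `t_{c,d}` with `c < d` shortens `w`
from the left iff `w⁻¹ d < w⁻¹ c`. For `c = i b`, `d = i a` this says that `(a, b)` is an inversion
of `i`, and, since `r⁻¹ = i⁻¹ f`, for `w = r` it says that `m a < m b`.
-/

section AffinePerm

variable {n : ℕ} {u v w : Equiv.Perm ℤ}

namespace IsAffinePerm

theorem map_add_mul (hw : IsAffinePerm n w) (a j : ℤ) : w (a + j * n) = w a + j * n := by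
  induction j using Int.induction_on with
  | zero => simp
  | succ j ih => rw [show a + (j + 1) * n = a + j * n + n by ring, hw, ih]; ring
  | pred j ih =>
    rw [show a + -j * n = a + (-j - 1) * n + n by ring, hw] at ih
    linarith

theorem inv (hw : IsAffinePerm n w) : IsAffinePerm n w⁻¹ := fun a => by
  rw [Equiv.Perm.inv_eq_iff_eq, hw]
  simp

theorem mul (hu : IsAffinePerm n u) (hv : IsAffinePerm n v) : IsAffinePerm n (u * v) := fun a => by
  rw [Equiv.Perm.mul_apply, Equiv.Perm.mul_apply, hv, hu]

theorem map_sub_map_of_dvd (hw : IsAffinePerm n w) {a b : ℤ} (h : (n : ℤ) ∣ a - b) :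
    w a - w b = a - b := by
  obtain ⟨j, hj⟩ := h
  rw [show a = b + j * n by linarith, hw.map_add_mul]
  ring

end IsAffinePerm

end AffinePerm

section Window

variable {n : ℕ}

def pairShift (n : ℕ) (j : ℤ) (p : ℤ × ℤ) : ℤ × ℤ := (p.1 + j * n, p.2 + j * n)

def window (n : ℕ) : Set (ℤ × ℤ) := {p | 1 ≤ p.1 ∧ p.1 ≤ n}

def toWindow (n : ℕ) (p : ℤ × ℤ) : ℤ × ℤ := pairShift n (-((p.1 - 1) / n)) p

def IsShiftInvariant (n : ℕ) (S : Set (ℤ × ℤ)) : Prop :=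
  ∀ j p, pairShift n j p ∈ S ↔ p ∈ S

def IsShiftEquivariant (n : ℕ) (σ : Equiv.Perm (ℤ × ℤ)) : Prop :=
  ∀ j p, σ (pairShift n j p) = pairShift n j (σ p)

theorem window_zero : window 0 = ∅ := by
  ext p
  simp only [window, Nat.cast_zero, Set.mem_ofPred_eq, Set.mem_empty_iff_false, iff_false]
  omega

theorem toWindow_mem_window (hn : 0 < n) (p : ℤ × ℤ) : toWindow n p ∈ window n := by
  have hn' : (0 : ℤ) < n := by exact_mod_cast hn
  have h₁ := Int.emod_nonneg (p.1 - 1) hn'.ne'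
  have h₂ := Int.emod_lt_of_pos (p.1 - 1) hn'
  have h₃ := Int.emod_add_mul_ediv (p.1 - 1) n
  simp only [toWindow, pairShift, window, Set.mem_ofPred_eq]
  constructor <;> linarith

theorem toWindow_of_mem {p : ℤ × ℤ} (hp : p ∈ window n) : toWindow n p = p := by
  have h : (p.1 - 1) / n = 0 := Int.ediv_eq_zero_of_lt (by linarith [hp.1]) (by linarith [hp.2])
  simp [toWindow, pairShift, h]

theorem toWindow_pairShift (hn : 0 < n) (j : ℤ) (p : ℤ × ℤ) :
    toWindow n (pairShift n j p) = toWindow n p := by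
  have h : (p.1 + j * n - 1) / n = (p.1 - 1) / n + j := by
    rw [show p.1 + j * n - 1 = p.1 - 1 + j * n by ring,
      Int.add_mul_ediv_right _ _ (by exact_mod_cast hn.ne')]
  simp only [toWindow, pairShift, h]
  ext <;> simp <;> ring

theorem eq_of_pairShift_eq (hn : 0 < n) {p q : ℤ × ℤ} (hp : p ∈ window n) (hq : q ∈ window n)
    {a b : ℤ} (h : pairShift n a p = pairShift n b q) : p = q := by
  simp only [pairShift, Prod.ext_iff] at h
  obtain ⟨h₁, h₂⟩ := h
  have hn' : (0 : ℤ) < n := by exact_mod_cast hn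
  have hab : a = b := by
    obtain ⟨hp₁, hp₂⟩ := hp
    obtain ⟨hq₁, hq₂⟩ := hq
    rcases lt_trichotomy a b with hlt | heq | hlt
    · nlinarith [show a + 1 ≤ b by omega]
    · exact heq
    · nlinarith [show b + 1 ≤ a by omega]
  subst hab
  ext <;> linarith

namespace IsShiftInvariant

variable {S T : Set (ℤ × ℤ)}

theorem toWindow_mem_iff (hS : IsShiftInvariant n S) {p : ℤ × ℤ} : toWindow n p ∈ S ↔ p ∈ S :=
  hS _ p

theorem sdiff (hS : IsShiftInvariant n S) (hT : IsShiftInvariant n T) :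
    IsShiftInvariant n (S \ T) := fun j p => and_congr (hS j p) (not_congr (hT j p))

theorem preimage (hS : IsShiftInvariant n S) {σ : Equiv.Perm (ℤ × ℤ)}
    (hσ : IsShiftEquivariant n σ) : IsShiftInvariant n (σ ⁻¹' S) := fun j p => by
  rw [Set.mem_preimage, Set.mem_preimage, hσ, hS]

theorem window_inter_nonempty_iff (hn : 0 < n) (hS : IsShiftInvariant n S) :
    (window n ∩ S).Nonempty ↔ S.Nonempty :=
  ⟨fun ⟨p, hp⟩ => ⟨p, hp.2⟩, fun ⟨p, hp⟩ =>
    ⟨toWindow n p, toWindow_mem_window hn p, hS.toWindow_mem_iff.2 hp⟩⟩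

theorem ncard_window_inter_lt (hn : 0 < n) (hS : IsShiftInvariant n S)
    (hT : IsShiftInvariant n T) (hfin : (window n ∩ S).Finite) (hTS : T ⊆ S) {x : ℤ × ℤ}
    (hx : x ∈ S \ T) : (window n ∩ T).ncard < (window n ∩ S).ncard := by
  refine Set.ncard_lt_ncard ((Set.ssubset_iff_of_subset (Set.inter_subset_inter_right _ hTS)).2
    ⟨toWindow n x, ⟨toWindow_mem_window hn x, hS.toWindow_mem_iff.2 hx.1⟩, ?_⟩) hfin
  exact fun h => hx.2 (hT.toWindow_mem_iff.1 h.2)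

end IsShiftInvariant

namespace IsShiftEquivariant

variable {σ τ : Equiv.Perm (ℤ × ℤ)}

theorem mul (hσ : IsShiftEquivariant n σ) (hτ : IsShiftEquivariant n τ) :
    IsShiftEquivariant n (σ * τ) := fun j p => by
  rw [Equiv.Perm.mul_apply, Equiv.Perm.mul_apply, hτ, hσ]

theorem injOn_toWindow (hn : 0 < n) (hσ : IsShiftEquivariant n σ) :
    Set.InjOn (fun p => toWindow n (σ p)) (window n) := fun p hp q hq h => by
  simp only [toWindow] at h
  rw [← hσ, ← hσ] at h
  exact eq_of_pairShift_eq hn hp hq (σ.injective h)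

theorem toWindow_apply_toWindow (hn : 0 < n) (hσ : IsShiftEquivariant n σ) (p : ℤ × ℤ) :
    toWindow n (σ (toWindow n p)) = toWindow n (σ p) := by
  obtain ⟨j, hj⟩ : ∃ j, toWindow n p = pairShift n j p := ⟨_, rfl⟩
  rw [hj, hσ, toWindow_pairShift hn]

theorem ncard_window_inter_preimage (hn : 0 < n) (hσ : IsShiftEquivariant n σ)
    {S : Set (ℤ × ℤ)} (hS : IsShiftInvariant n S) :
    (window n ∩ σ ⁻¹' S).ncard = (window n ∩ S).ncard := by
  rw [← ((hσ.injOn_toWindow hn).mono Set.inter_subset_left).ncard_image]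
  congr 1
  ext q
  constructor
  · rintro ⟨p, ⟨-, hp⟩, rfl⟩
    exact ⟨toWindow_mem_window hn _, hS.toWindow_mem_iff.2 hp⟩
  · rintro ⟨hq, hqS⟩
    refine ⟨toWindow n (σ⁻¹ q), ⟨toWindow_mem_window hn _, ?_⟩, ?_⟩
    · exact (hS.preimage hσ).toWindow_mem_iff.2 (by simpa using hqS)
    · simp only [toWindow_apply_toWindow hn hσ, Equiv.Perm.coe_inv, Equiv.apply_symm_apply,
        toWindow_of_mem hq]

end IsShiftEquivariant

end Window

section Inversions

variable {n : ℕ} {u v w : Equiv.Perm ℤ}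

def inversions (w : Equiv.Perm ℤ) : Set (ℤ × ℤ) := {p | p.1 < p.2 ∧ w p.2 < w p.1}

theorem aLen_eq_ncard (n : ℕ) (w : Equiv.Perm ℤ) :
    aLen n w = (window n ∩ inversions w).ncard := by
  simp only [aLen, window, inversions, ← Set.ofPred_and, and_assoc]

namespace IsAffinePerm

theorem isShiftInvariant_inversions (hw : IsAffinePerm n w) :
    IsShiftInvariant n (inversions w) := fun j p => by
  simp only [inversions, pairShift, Set.mem_ofPred_eq, hw.map_add_mul, add_lt_add_iff_right]

theorem isShiftEquivariant_prodCongr (hw : IsAffinePerm n w) :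
    IsShiftEquivariant n (Equiv.prodCongr w w) := fun j p => by
  simp [pairShift, hw.map_add_mul]

/-- `w a - a` is periodic, hence bounded, and this bounds `b` in a window inversion `(a, b)`. -/
theorem finite_window_inter_inversions (hn : 0 < n) (hw : IsAffinePerm n w) :
    (window n ∩ inversions w).Finite := by
  have hper : Function.Periodic (fun a => w a - a) (n : ℤ) := fun a => by
    simp only [hw a]
    ring
  have hfin : (Set.range fun a => w a - a).Finite := by
    rw [← hper.image_Icc (by exact_mod_cast hn) 0]
    exact (Set.finite_Icc _ _).image _
  obtain ⟨K, hK⟩ := hfin.bddAbove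
  obtain ⟨L, hL⟩ := hfin.bddBelow
  refine ((Set.finite_Icc (1 : ℤ) n).prod (Set.finite_Icc (1 : ℤ) (n + K - L))).subset ?_
  rintro ⟨a, b⟩ ⟨⟨ha₁, ha₂⟩, hab, hba⟩
  have h₁ : w a - a ≤ K := hK ⟨a, rfl⟩
  have h₂ : L ≤ w b - b := hL ⟨b, rfl⟩
  simp only [Set.mem_prod, Set.mem_Icc] at hab hba ⊢
  omega

theorem aLen_eq_ncard_inter_add_ncard_sdiff (hn : 0 < n) (hw : IsAffinePerm n w)
    (S : Set (ℤ × ℤ)) :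
    aLen n w = (window n ∩ (inversions w ∩ S)).ncard + (window n ∩ (inversions w \ S)).ncard := by
  rw [aLen_eq_ncard, ← Set.ncard_inter_add_ncard_sdiff_eq_ncard _ S
    (hw.finite_window_inter_inversions hn), Set.inter_assoc, Set.inter_sdiff_assoc]

end IsAffinePerm

theorem isShiftEquivariant_prodComm : IsShiftEquivariant n (Equiv.prodComm ℤ ℤ) := fun _ _ => rfl

/-- An inversion `(a, b)` of `u` pulls back along `v` to the inversion `(v⁻¹ a, v⁻¹ b)` of `u * v`
when `v⁻¹ a < v⁻¹ b`, and otherwise to the inversion `(v⁻¹ b, v⁻¹ a)` of `v`. -/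
theorem inversions_eq_preimage_union (v : Equiv.Perm ℤ) :
    inversions u = Equiv.prodCongr v⁻¹ v⁻¹ ⁻¹' (inversions (u * v) \ inversions v) ∪
      (Equiv.prodComm ℤ ℤ * Equiv.prodCongr v⁻¹ v⁻¹ : Equiv.Perm (ℤ × ℤ)) ⁻¹'
        (inversions v \ inversions (u * v)) := by
  ext ⟨a, b⟩
  have hv : v⁻¹ a = v⁻¹ b ↔ a = b := (v⁻¹).injective.eq_iff
  have hu : u a = u b ↔ a = b := u.injective.eq_iff
  simp only [inversions, Set.mem_union, Set.mem_preimage, Set.mem_sdiff, Set.mem_ofPred_eq,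
    Equiv.prodCongr_apply, Prod.map, Equiv.Perm.mul_apply, Equiv.prodComm_apply, Prod.swap,
    Equiv.Perm.coe_inv, Equiv.apply_symm_apply] at hv ⊢
  omega

theorem aLen_add_aLen (hn : 0 < n) (hu : IsAffinePerm n u) (hv : IsAffinePerm n v) :
    aLen n u + aLen n v =
      aLen n (u * v) + 2 * (window n ∩ (inversions v \ inversions (u * v))).ncard := by
  have huv := hu.mul hv
  have hB := hv.isShiftInvariant_inversions.sdiff huv.isShiftInvariant_inversions
  have hC := huv.isShiftInvariant_inversions.sdiff hv.isShiftInvariant_inversions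
  have hσ := hv.inv.isShiftEquivariant_prodCongr
  have hu' : aLen n u = (window n ∩ (inversions (u * v) \ inversions v)).ncard +
      (window n ∩ (inversions v \ inversions (u * v))).ncard := by
    have hdisj : Disjoint (window n ∩ Equiv.prodCongr v⁻¹ v⁻¹ ⁻¹'
          (inversions (u * v) \ inversions v))
        (window n ∩ (Equiv.prodComm ℤ ℤ * Equiv.prodCongr v⁻¹ v⁻¹ : Equiv.Perm (ℤ × ℤ)) ⁻¹'
          (inversions v \ inversions (u * v))) := by
      rw [Set.disjoint_left]
      rintro ⟨a, b⟩ ⟨-, ⟨hab, -⟩, -⟩ ⟨-, ⟨hba, -⟩, -⟩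
      simp only [Equiv.prodCongr_apply, Prod.map, Equiv.Perm.mul_apply, Equiv.prodComm_apply,
        Prod.swap] at hab hba
      omega
    have hfin := hu.finite_window_inter_inversions hn
    rw [inversions_eq_preimage_union v, Set.inter_union_distrib_left] at hfin
    rw [aLen_eq_ncard, inversions_eq_preimage_union v, Set.inter_union_distrib_left,
      Set.ncard_union_eq hdisj (hfin.subset Set.subset_union_left)
        (hfin.subset Set.subset_union_right), hσ.ncard_window_inter_preimage hn hC,
      (isShiftEquivariant_prodComm.mul hσ).ncard_window_inter_preimage hn hB]
  rw [hu', hv.aLen_eq_ncard_inter_add_ncard_sdiff hn (inversions (u * v)),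
    huv.aLen_eq_ncard_inter_add_ncard_sdiff hn (inversions v), Set.inter_comm (inversions v)]
  ring

end Inversions

section Transposition

variable {n : ℕ} {t w : Equiv.Perm ℤ} {c d : ℤ}

namespace IsAffTranspAt

theorem symm (ht : IsAffTranspAt n c d t) : IsAffTranspAt n d c t :=
  ⟨fun h => ht.1 (by simpa using h.neg_right), fun x =>
    ⟨(ht.2 x).2.1, (ht.2 x).1, fun hd hc => (ht.2 x).2.2 hc hd⟩⟩

theorem ne (ht : IsAffTranspAt n c d t) : c ≠ d := by
  rintro rfl
  exact ht.1 (by simp)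

theorem apply_add_mul_left (ht : IsAffTranspAt n c d t) (j : ℤ) : t (c + j * n) = d + j * n := by
  rw [(ht.2 _).1 ⟨j, by ring⟩]
  ring

theorem apply_add_mul_right (ht : IsAffTranspAt n c d t) (j : ℤ) :
    t (d + j * n) = c + j * n :=
  ht.symm.apply_add_mul_left j

theorem apply_left (ht : IsAffTranspAt n c d t) : t c = d := by
  simpa using ht.apply_add_mul_left 0

theorem apply_right (ht : IsAffTranspAt n c d t) : t d = c :=
  ht.symm.apply_left

theorem apply_cases (ht : IsAffTranspAt n c d t) (x : ℤ) :
    (∃ j : ℤ, x = c + j * n ∧ t x = d + j * n) ∨ (∃ j : ℤ, x = d + j * n ∧ t x = c + j * n) ∨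
      (¬ (n : ℤ) ∣ x - c ∧ ¬ (n : ℤ) ∣ x - d ∧ t x = x) := by
  by_cases hc : (n : ℤ) ∣ x - c
  · obtain ⟨j, hj⟩ := hc
    exact Or.inl ⟨j, by linarith, by rw [show x = c + j * n by linarith, ht.apply_add_mul_left]⟩
  by_cases hd : (n : ℤ) ∣ x - d
  · obtain ⟨j, hj⟩ := hd
    exact Or.inr (Or.inl ⟨j, by linarith,
      by rw [show x = d + j * n by linarith, ht.apply_add_mul_right]⟩)
  exact Or.inr (Or.inr ⟨hc, hd, (ht.2 x).2.2 hc hd⟩)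

theorem apply_apply (ht : IsAffTranspAt n c d t) (x : ℤ) : t (t x) = x := by
  rcases ht.apply_cases x with ⟨j, rfl, h⟩ | ⟨j, rfl, h⟩ | ⟨-, -, h⟩
  · rw [h, ht.apply_add_mul_right]
  · rw [h, ht.apply_add_mul_left]
  · rw [h, h]

theorem mul_self (ht : IsAffTranspAt n c d t) : t * t = 1 :=
  Equiv.ext ht.apply_apply

theorem isAffinePerm (ht : IsAffTranspAt n c d t) : IsAffinePerm n t := fun x => by
  have hshift : ∀ e : ℤ, (n : ℤ) ∣ x + n - e ↔ (n : ℤ) ∣ x - e := fun e => by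
    rw [add_sub_right_comm, dvd_add_self_right]
  rcases ht.apply_cases x with ⟨j, rfl, h⟩ | ⟨j, rfl, h⟩ | ⟨hc, hd, h⟩
  · rw [h, show c + j * n + n = c + (j + 1) * n by ring, ht.apply_add_mul_left]
    ring
  · rw [h, show d + j * n + n = d + (j + 1) * n by ring, ht.apply_add_mul_right]
    ring
  · rw [h, (ht.2 _).2.2 (by rwa [hshift]) (by rwa [hshift])]

end IsAffTranspAt

theorem exists_isAffTranspAt (hcd : ¬ (n : ℤ) ∣ d - c) : ∃ t, IsAffTranspAt n c d t := by
  have hexcl : ∀ x, (n : ℤ) ∣ x - c → ¬ (n : ℤ) ∣ x - d := fun x hc hd =>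
    hcd (by simpa using dvd_sub hc hd)
  let T : ℤ → ℤ := fun x =>
    if (n : ℤ) ∣ x - c then x - c + d else if (n : ℤ) ∣ x - d then x - d + c else x
  have hTc : ∀ x, (n : ℤ) ∣ x - c → T x = x - c + d := fun x h => if_pos h
  have hTd : ∀ x, (n : ℤ) ∣ x - d → T x = x - d + c := fun x h =>
    (if_neg fun h' => hexcl x h' h).trans (if_pos h)
  have hT : ∀ x, ¬ (n : ℤ) ∣ x - c → ¬ (n : ℤ) ∣ x - d → T x = x := fun x hc hd =>
    (if_neg hc).trans (if_neg hd)
  have hinv : Function.Involutive T := fun x => by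
    by_cases hc : (n : ℤ) ∣ x - c
    · rw [hTc x hc, hTd _ (by rwa [add_sub_cancel_right])]
      ring
    by_cases hd : (n : ℤ) ∣ x - d
    · rw [hTd x hd, hTc _ (by rwa [add_sub_cancel_right])]
      ring
    rw [hT x hc hd, hT x hc hd]
  exact ⟨hinv.toPerm T, hcd, fun x => ⟨hTc x, hTd x, hT x⟩⟩

theorem IsAffTranspAt.conj_mem_inversions_sdiff (hw : IsAffinePerm n w)
    (ht : IsAffTranspAt n c d t) (hcd : c < d) (hdc : w⁻¹ d < w⁻¹ c) {a b : ℤ}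
    (hab : (a, b) ∈ inversions (t * w) \ inversions w) :
    (w⁻¹ (t (w a)), w⁻¹ (t (w b))) ∈ inversions w \ inversions (t * w) := by
  have hmove : ∀ x, (t (w x) = w x ∧ w⁻¹ (t (w x)) = x) ∨
      (t (w x) = w x + (d - c) ∧ w⁻¹ (t (w x)) < x) ∨
      (t (w x) = w x - (d - c) ∧ x < w⁻¹ (t (w x))) := fun x => by
    have hx : w⁻¹ (w x) = x := by simp
    rcases ht.apply_cases (w x) with ⟨j, hj, h⟩ | ⟨j, hj, h⟩ | ⟨-, -, h⟩
    · refine Or.inr (Or.inl ⟨by linarith, ?_⟩)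
      rw [h, hw.inv.map_add_mul, ← hx, hj, hw.inv.map_add_mul]
      linarith
    · refine Or.inr (Or.inr ⟨by linarith, ?_⟩)
      rw [h, hw.inv.map_add_mul, ← hx, hj, hw.inv.map_add_mul]
      linarith
    · exact Or.inl ⟨h, by rw [h, hx]⟩
  have hwab : w a ≠ w b := fun h => by
    have := w.injective h
    simp only [inversions, Set.mem_sdiff, Set.mem_ofPred_eq] at hab
    omega
  simp only [inversions, Set.mem_sdiff, Set.mem_ofPred_eq, Equiv.Perm.mul_apply,
    Equiv.Perm.coe_inv, Equiv.apply_symm_apply, ht.apply_apply] at hab ⊢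
  simp only [Equiv.Perm.coe_inv] at hmove
  -- in each admissible case `w⁻¹ t w a ≤ a < b ≤ w⁻¹ t w b`
  rcases hmove a with ha | ha | ha <;> rcases hmove b with hb | hb | hb <;> omega

theorem aLen_mul_lt_of_lt (hn : 0 < n) (hw : IsAffinePerm n w) (ht : IsAffTranspAt n c d t)
    (hcd : c < d) (hdc : w⁻¹ d < w⁻¹ c) : aLen n (t * w) < aLen n w := by
  have htw := ht.isAffinePerm.mul hw
  let σ : Equiv.Perm (ℤ × ℤ) := Equiv.prodCongr (w⁻¹ * t * w) (w⁻¹ * t * w)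
  have hσ : IsShiftEquivariant n σ :=
    ((hw.inv.mul ht.isAffinePerm).mul hw).isShiftEquivariant_prodCongr
  have hD := hw.isShiftInvariant_inversions.sdiff htw.isShiftInvariant_inversions
  have hT := htw.isShiftInvariant_inversions.sdiff hw.isShiftInvariant_inversions
  -- `σ` maps the inversions gained by `t * w` into those lost, missing `(w⁻¹ d, w⁻¹ c)`
  have hTD : σ ⁻¹' (inversions (t * w) \ inversions w) ⊆ inversions w \ inversions (t * w) :=
    fun p hp => by
      simpa [σ, ht.apply_apply] using
        ht.conj_mem_inversions_sdiff hw hcd hdc (a := (σ p).1) (b := (σ p).2) hp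
  have hwit : (w⁻¹ d, w⁻¹ c) ∈
      (inversions w \ inversions (t * w)) \ σ ⁻¹' (inversions (t * w) \ inversions w) := by
    simp only [Equiv.Perm.coe_inv] at hdc
    simp [σ, inversions, ht.apply_left, ht.apply_right]
    omega
  have hlt := hD.ncard_window_inter_lt hn (hT.preimage hσ) ((hw.finite_window_inter_inversions
    hn).subset (Set.inter_subset_inter_right _ Set.sdiff_subset)) hTD hwit
  rw [hσ.ncard_window_inter_preimage hn hT] at hlt
  rw [hw.aLen_eq_ncard_inter_add_ncard_sdiff hn (inversions (t * w)),
    htw.aLen_eq_ncard_inter_add_ncard_sdiff hn (inversions w), Set.inter_comm (inversions w)]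
  omega

theorem aLen_mul_lt_iff (hn : 0 < n) (hw : IsAffinePerm n w) (ht : IsAffTranspAt n c d t)
    (hcd : c < d) : aLen n (t * w) < aLen n w ↔ w⁻¹ d < w⁻¹ c := by
  refine ⟨fun h => ?_, aLen_mul_lt_of_lt hn hw ht hcd⟩
  by_contra hdc
  have hcd' : w⁻¹ c < w⁻¹ d := lt_of_le_of_ne (not_lt.1 hdc) (by simpa using hcd.ne)
  have h' := aLen_mul_lt_of_lt hn (ht.isAffinePerm.mul hw) ht hcd (by
    rw [mul_inv_rev, inv_eq_of_mul_eq_one_right ht.mul_self, Equiv.Perm.mul_apply,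
      Equiv.Perm.mul_apply, ht.apply_left, ht.apply_right]
    exact hcd')
  rw [← mul_assoc, ht.mul_self, one_mul] at h'
  omega

end Transposition

section Descent

variable {n : ℕ} {v w f i : Equiv.Perm ℤ}

theorem aLen_conj_lt_iff_of_leR (hn : 0 < n) (hf : IsAffinePerm n f) (hi : IsAffinePerm n i)
    (hle : LeR n i f) :
    aLen n (i⁻¹ * f * i) < aLen n f ↔ (inversions i \ inversions (i⁻¹ * f * i)).Nonempty := by
  have hadd := aLen_add_aLen hn (hi.inv.mul hf) hi
  have hS := hi.isShiftInvariant_inversions.sdiff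
    ((hi.inv.mul hf).mul hi).isShiftInvariant_inversions
  rw [← hS.window_inter_nonempty_iff hn, ← Set.ncard_pos ((hi.finite_window_inter_inversions
    hn).subset (Set.inter_subset_inter_right _ Set.sdiff_subset))]
  unfold LeR at hle
  omega

theorem exists_common_left_descent_iff (hn : 0 < n) (hv : IsAffinePerm n v)
    (hw : IsAffinePerm n w) :
    (∃ t, IsAffTransp n t ∧ aLen n (t * v) < aLen n v ∧ aLen n (t * w) < aLen n w) ↔
      (inversions w \ inversions (v⁻¹ * w)).Nonempty := by
  constructor
  · rintro ⟨t, ⟨c, d, ht⟩, hv', hw'⟩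
    wlog hcd : c < d generalizing c d
    · exact this d c ht.symm (lt_of_le_of_ne (not_lt.1 hcd) ht.ne.symm)
    rw [aLen_mul_lt_iff hn hv ht hcd] at hv'
    rw [aLen_mul_lt_iff hn hw ht hcd] at hw'
    refine ⟨(w⁻¹ d, w⁻¹ c), ?_⟩
    simp only [Equiv.Perm.coe_inv] at hv' hw'
    simp [inversions, hw', hv'.le, hcd]
  · rintro ⟨⟨a, b⟩, ⟨hab, hba⟩, hvw⟩
    dsimp only at hab hba
    have hdvd : ¬ (n : ℤ) ∣ w a - w b := fun h => by
      have := hw.inv.map_sub_map_of_dvd h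
      simp only [Equiv.Perm.coe_inv, Equiv.symm_apply_apply] at this
      omega
    obtain ⟨t, ht⟩ := exists_isAffTranspAt hdvd
    have hvab : v⁻¹ (w a) < v⁻¹ (w b) := by
      have hne : v⁻¹ (w a) ≠ v⁻¹ (w b) := fun h => hab.ne (by simpa using h)
      simp only [inversions, Set.mem_ofPred_eq, Equiv.Perm.mul_apply, not_and, not_lt] at hvw
      exact lt_of_le_of_ne (hvw hab) hne
    exact ⟨t, ⟨_, _, ht⟩, (aLen_mul_lt_iff hn hv ht hba).2 hvab,
      (aLen_mul_lt_iff hn hw ht hba).2 (by simpa using hab)⟩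

end Descent

theorem conjugate_length_lt_iff_common_left_reflection_general
    (n k : ℕ) (f i : Equiv.Perm ℤ)
    (hfB : f ∈ Bound k n)
    (hiB : i ∈ Bound k n)
    (hle : LeR n i f) :
    aLen n (i⁻¹ * f * i) < aLen n f ↔
      ∃ t : Equiv.Perm ℤ, IsAffTransp n t ∧
        aLen n (t * (f⁻¹ * i)) < aLen n (f⁻¹ * i) ∧
        aLen n (t * i) < aLen n i := by
  rcases Nat.eq_zero_or_pos n with rfl | hn
  · simp [aLen_eq_ncard, window_zero]
  rw [aLen_conj_lt_iff_of_leR hn hfB.1 hiB.1 hle,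
    exists_common_left_descent_iff hn (hfB.1.inv.mul hiB.1) hiB.1]
  simp [mul_assoc]

/-- With `r = f⁻¹·i` and `m = i⁻¹·f·i`, one has `ℓ(m) < ℓ(f)` iff there is an
affine transposition `t` with `ℓ(t·r) < ℓ(r)` and `ℓ(t·i) < ℓ(i)`. -/
theorem conjugate_length_lt_iff_common_left_reflection
    (n k : ℕ) (π ι : Equiv.Perm (Fin n)) (f i : Equiv.Perm ℤ)
    (hπ : IsType k n π) (hι : IsType k n ι)
    (hf : IsLift n π f) (hfB : f ∈ Bound k n)
    (hi : IsLift n ι i) (hiB : i ∈ Bound k n)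
    (hle : LeR n i f) :
    aLen n (i⁻¹ * f * i) < aLen n f ↔
      ∃ t : Equiv.Perm ℤ, IsAffTransp n t ∧
        aLen n (t * (f⁻¹ * i)) < aLen n (f⁻¹ * i) ∧
        aLen n (t * i) < aLen n i :=
  conjugate_length_lt_iff_common_left_reflection_general n k f i hfB hiB hle
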